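/- Pattern D (three-term contiguous relation of ₃φ₂-series): Let a,b,c,d,e ∈ ℂ with a,c,e ≠ 0, |bd/(qace)| < 1, and all denominators appearing below nonzero. Set 𝒟_q = (1−q/b)(1−q/d)·a / ((1−qa/b)(1−qa/d)), 𝔻_q = (1−a)(1−qace/(bd))·q / ((1−qa/b)(1−qa/d)·ce), and 𝔇_q = (1−qace/(bd))(1−q/b)(1−q/d)·a / ((1−qa/b)(1−qa/d)(1−c/q)(1−e/q)). Then ₃φ₂(a,c,e; b,d; q, bd/(ace)) = 𝒟_q·₃φ₂(a,c/q,e/q; b/q,d/q; q, bd/(ace)) + 𝔻_q·₃φ₂(qa,c,e; b,d; q, bd/(qace)), and also ₃φ₂(a,c,e; b,d; q, bd/(ace)) = 𝒟_q·₃φ₂(a,c/q,e/q; b/q,d/q; q, bd/(ace)) + 𝔇_q·₃φ₂*(a,c/q,e/q; b/q,d/q; q, bd/(qace)). -/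

import Mathlib

/-!
Put `C = c/q`, `E = e/q`, `B = b/q`, `D = d/q` and `w = BD/(qaCE)`, so that the arguments are `qw`
and `w`, `𝒟_q = a(B-1)(D-1)/((B-a)(D-a))` and `𝔇_q = (1 - 1/w) Λ` with `Λ = 𝒟_q/((1-C)(1-E))`.
Let `u_k` be the terms of `₃φ₂(a,C,E;B,D;q,w)`. The `k`-th terms of `₃φ₂(a,c,e;b,d;q,qw)`,
`₃φ₂(a,C,E;B,D;q,qw)` and `₃φ₂*(a,C,E;B,D;q,w)` are `u_k` times rational functions of `x = q^k`,
and one identity between these rational functions shows that the first equals `𝒟_q` times the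
second plus `𝔇_q` times the third plus `F_k - F_{k+1}`, where `F_k = Λ (1/w - CE q^k)(1 - q^k) u_k`.
Since `F_0 = 0`, summing gives the second identity. Shifting the index of `₃φ₂*` by one (its
`k = 0` term vanishes) turns it into `w (1-a)(1-C)(1-E)/((1-B)(1-D)) · ₃φ₂(qa,c,e;b,d;q,w)`, which
gives the first identity.
-/

noncomputable def qPoch (q x : ℂ) (k : ℕ) : ℂ :=
  ∏ i ∈ Finset.range k, (1 - x * q ^ i)

/-- The basic hypergeometric series ₃φ₂(a,c,e; b,d; q, z). -/
noncomputable def phi32 (q z a c e b d : ℂ) : ℂ :=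
  ∑' k : ℕ, (qPoch q a k * qPoch q c k * qPoch q e k) /
      (qPoch q b k * qPoch q d k * qPoch q q k) * z ^ k

/-- The shifted basic hypergeometric series ₃φ₂*(a,c,e; b,d; q, z). -/
noncomputable def phi32s (q z a c e b d : ℂ) : ℂ :=
  ∑' k : ℕ, (qPoch q a k * qPoch q c k * qPoch q e k) /
      (qPoch q b k * qPoch q d k * qPoch q q k) * ((1 - q ^ k) * z ^ k)

open Filter Topology

lemma qPoch_succ (q x : ℂ) (k : ℕ) : qPoch q x (k + 1) = qPoch q x k * (1 - x * q ^ k) :=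
  Finset.prod_range_succ _ _

lemma qPoch_succ' (q x : ℂ) (k : ℕ) : qPoch q x (k + 1) = (1 - x) * qPoch q (q * x) k := by
  rw [qPoch, Finset.prod_range_succ', pow_zero, mul_one, mul_comm]
  exact congrArg _ (Finset.prod_congr rfl fun i _ ↦ by ring)

lemma qPoch_mul_left (q : ℂ) {x : ℂ} (hx : 1 - x ≠ 0) (k : ℕ) :
    qPoch q (q * x) k = qPoch q x k * (1 - x * q ^ k) / (1 - x) := by
  rw [eq_div_iff hx, ← qPoch_succ, qPoch_succ', mul_comm]

lemma one_sub_mul_pow_ne_zero_of_qPoch_ne_zero {q x : ℂ} (h : ∀ k, qPoch q x k ≠ 0) (k : ℕ) :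
    1 - x * q ^ k ≠ 0 := fun hk ↦ h (k + 1) (by rw [qPoch_succ, hk, mul_zero])

lemma one_sub_mul_pow_ne_zero {q : ℂ} (hq : ‖q‖ < 1) (k : ℕ) : 1 - q * q ^ k ≠ 0 := by
  rw [← pow_succ', sub_ne_zero]
  refine fun h ↦ (pow_lt_one₀ (norm_nonneg q) hq k.succ_ne_zero).ne ?_
  rw [← norm_pow, ← h, norm_one]

lemma summable_of_succ_eq_mul {R : Type*} [NormedRing R] [CompleteSpace R] {f ρ : ℕ → R} {l : R}
    (hl : ‖l‖ < 1) (hρ : Tendsto ρ atTop (𝓝 l)) (hf : ∀ k, f (k + 1) = ρ k * f k) :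
    Summable f := by
  obtain ⟨r, hlr, hr⟩ := exists_between hl
  refine summable_of_ratio_norm_eventually_le hr ?_
  filter_upwards [hρ.norm.eventually (gt_mem_nhds hlr)] with k hk
  rw [hf]
  exact (norm_mul_le _ _).trans (by gcongr)

lemma Summable.pow_mul_of_norm_le_one {f : ℕ → ℂ} (hf : Summable f) {q : ℂ} (hq : ‖q‖ ≤ 1) :
    Summable fun k ↦ q ^ k * f k :=
  hf.norm.of_norm_bounded fun k ↦ by
    rw [norm_mul, norm_pow]
    exact mul_le_of_le_one_left (norm_nonneg _) (pow_le_one₀ (norm_nonneg _) hq)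

lemma tsum_eq_tsum_succ_of_eq_zero {M : Type*} [AddCommMonoid M] [TopologicalSpace M] {f : ℕ → M}
    (hf : f 0 = 0) : ∑' k, f k = ∑' k, f (k + 1) :=
  (tsum_pnat_eq_tsum_of_eq_zero hf).symm.trans tsum_pnat_eq_tsum_succ

lemma tsum_eq_add_of_eq_add_add_sub_succ {G : Type*} [AddCommGroup G] [TopologicalSpace G]
    [IsTopologicalAddGroup G] [T2Space G] {f g h F : ℕ → G} (hg : Summable g) (hh : Summable h)
    (hF : Summable F) (hF0 : F 0 = 0) (hf : ∀ k, f k = g k + h k + (F k - F (k + 1))) :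
    ∑' k, f k = ∑' k, g k + ∑' k, h k := by
  have hF1 : Summable fun k ↦ F (k + 1) := (summable_nat_add_iff 1).2 hF
  have htel : ∑' k, (F k - F (k + 1)) = 0 := by
    rw [hF.tsum_sub hF1, hF.tsum_eq_zero_add, hF0, zero_add, sub_self]
  simp_rw [hf]
  rw [(hg.add hh).tsum_add (hF.sub hF1), hg.tsum_add hh, htel, add_zero]

noncomputable def phi32Coeff (q a c e b d : ℂ) (k : ℕ) : ℂ :=
  qPoch q a k * qPoch q c k * qPoch q e k / (qPoch q b k * qPoch q d k * qPoch q q k)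

lemma phi32_eq_tsum (q z a c e b d : ℂ) :
    phi32 q z a c e b d = ∑' k, phi32Coeff q a c e b d k * z ^ k := rfl

lemma phi32s_eq_tsum (q z a c e b d : ℂ) :
    phi32s q z a c e b d = ∑' k, phi32Coeff q a c e b d k * ((1 - q ^ k) * z ^ k) := rfl

lemma phi32Coeff_succ (q a c e b d : ℂ) (k : ℕ) :
    phi32Coeff q a c e b d (k + 1) = phi32Coeff q a c e b d k *
      ((1 - a * q ^ k) * (1 - c * q ^ k) * (1 - e * q ^ k) /
        ((1 - b * q ^ k) * (1 - d * q ^ k) * (1 - q * q ^ k))) := by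
  simp only [phi32Coeff, qPoch_succ, div_eq_mul_inv, mul_inv]
  ring

lemma phi32Coeff_succ_mul_one_sub_pow {q : ℂ} (hq : ‖q‖ < 1) (a c e b d : ℂ) (k : ℕ) :
    phi32Coeff q a c e b d (k + 1) * (1 - q ^ (k + 1)) = phi32Coeff q a c e b d k *
      ((1 - a * q ^ k) * (1 - c * q ^ k) * (1 - e * q ^ k) /
        ((1 - b * q ^ k) * (1 - d * q ^ k))) := by
  rw [phi32Coeff_succ, pow_succ', mul_assoc, div_mul_eq_mul_div,
    mul_div_mul_right _ _ (one_sub_mul_pow_ne_zero hq k)]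

lemma phi32Coeff_succ_mul_one_sub_pow' {q : ℂ} (hq : ‖q‖ < 1) (a c e b d : ℂ) (k : ℕ) :
    phi32Coeff q a c e b d (k + 1) * (1 - q ^ (k + 1)) = (1 - a) * (1 - c) * (1 - e) /
      ((1 - b) * (1 - d)) * phi32Coeff q (q * a) (q * c) (q * e) (q * b) (q * d) k := by
  rw [phi32Coeff, qPoch_succ q q, pow_succ', div_mul_eq_mul_div, ← mul_assoc _ (qPoch q q k),
    mul_div_mul_right _ _ (one_sub_mul_pow_ne_zero hq k)]
  simp only [phi32Coeff, qPoch_succ', div_eq_mul_inv, mul_inv]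
  ring

lemma phi32Coeff_mul_left (q a : ℂ) {c e b d : ℂ} (hc : 1 - c ≠ 0) (he : 1 - e ≠ 0)
    (hb : 1 - b ≠ 0) (hd : 1 - d ≠ 0) (k : ℕ) :
    phi32Coeff q a (q * c) (q * e) (q * b) (q * d) k = phi32Coeff q a c e b d k *
      ((1 - c * q ^ k) * (1 - e * q ^ k) * (1 - b) * (1 - d) /
        ((1 - c) * (1 - e) * (1 - b * q ^ k) * (1 - d * q ^ k))) := by
  simp only [phi32Coeff, qPoch_mul_left q hc, qPoch_mul_left q he, qPoch_mul_left q hb,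
    qPoch_mul_left q hd, div_eq_mul_inv, mul_inv, inv_inv]
  ring

lemma summable_phi32Coeff_mul_pow {q z : ℂ} (hq : ‖q‖ < 1) (hz : ‖z‖ < 1) (a c e b d : ℂ) :
    Summable fun k ↦ phi32Coeff q a c e b d k * z ^ k := by
  set g : ℂ → ℂ := fun x ↦
    (1 - a * x) * (1 - c * x) * (1 - e * x) / ((1 - b * x) * (1 - d * x) * (1 - q * x)) * z
  have hg : ContinuousAt g 0 := by fun_prop (disch := simp)
  have hlim : Tendsto (fun k : ℕ ↦ g (q ^ k)) atTop (𝓝 z) := by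
    simpa [g, Function.comp_def] using
      hg.tendsto.comp (tendsto_pow_atTop_nhds_zero_of_norm_lt_one hq)
  refine summable_of_succ_eq_mul hz hlim fun k ↦ ?_
  rw [phi32Coeff_succ, pow_succ]
  ring

lemma phi32s_eq_mul_phi32 {q : ℂ} (hq : ‖q‖ < 1) (w a c e b d : ℂ) :
    phi32s q w a c e b d = w * ((1 - a) * (1 - c) * (1 - e) / ((1 - b) * (1 - d))) *
      phi32 q w (q * a) (q * c) (q * e) (q * b) (q * d) := by
  rw [phi32s_eq_tsum, phi32_eq_tsum, ← tsum_mul_left, tsum_eq_tsum_succ_of_eq_zero (by simp)]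
  congr 1 with k
  linear_combination w ^ (k + 1) * phi32Coeff_succ_mul_one_sub_pow' hq a c e b d k

lemma contiguous_ratio_identity {q A C E B D x : ℂ} (hq : q ≠ 0) (hA : A ≠ 0) (hC : C ≠ 0)
    (hE : E ≠ 0) (hB : B ≠ 0) (hD : D ≠ 0) (hAB : B - A ≠ 0) (hAD : D - A ≠ 0)
    (hC1 : 1 - C ≠ 0) (hE1 : 1 - E ≠ 0) (hBx : 1 - B * x ≠ 0) (hDx : 1 - D * x ≠ 0) :
    x * ((1 - C * x) * (1 - E * x) * (1 - B) * (1 - D) /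
        ((1 - C) * (1 - E) * (1 - B * x) * (1 - D * x))) =
      A * (B - 1) * (D - 1) / ((B - A) * (D - A)) * x +
      A * (B - 1) * (D - 1) * (1 - q * A * C * E / (B * D)) /
        ((B - A) * (D - A) * (1 - C) * (1 - E)) * (1 - x) +
      (A * (B - 1) * (D - 1) / ((B - A) * (D - A) * (1 - C) * (1 - E)) *
          (q * A * C * E / (B * D) - C * E * x) * (1 - x) -
        A * (B - 1) * (D - 1) / ((B - A) * (D - A) * (1 - C) * (1 - E)) *
          (q * A * C * E / (B * D) - C * E * (q * x)) *
          (B * D / (q * A * C * E) * ((1 - A * x) * (1 - C * x) * (1 - E * x) /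
            ((1 - B * x) * (1 - D * x))))) := by
  rw [mul_comm B x] at hBx ⊢
  rw [mul_comm D x] at hDx ⊢
  field_simp
  ring

theorem phi32_contiguous {q A C E B D : ℂ} (hq : ‖q‖ < 1) (hq0 : q ≠ 0) (hA : A ≠ 0) (hC : C ≠ 0)
    (hE : E ≠ 0) (hB : B ≠ 0) (hD : D ≠ 0) (hw : ‖B * D / (q * A * C * E)‖ < 1)
    (hC1 : 1 - C ≠ 0) (hE1 : 1 - E ≠ 0) (hAB : B - A ≠ 0) (hAD : D - A ≠ 0)
    (hBk : ∀ k, qPoch q B k ≠ 0) (hDk : ∀ k, qPoch q D k ≠ 0) :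
    phi32 q (B * D / (A * C * E)) A (q * C) (q * E) (q * B) (q * D) =
      A * (B - 1) * (D - 1) / ((B - A) * (D - A)) * phi32 q (B * D / (A * C * E)) A C E B D +
      A * (B - 1) * (D - 1) * (1 - q * A * C * E / (B * D)) /
          ((B - A) * (D - A) * (1 - C) * (1 - E)) *
        phi32s q (B * D / (q * A * C * E)) A C E B D := by
  have hBq := one_sub_mul_pow_ne_zero_of_qPoch_ne_zero hBk
  have hDq := one_sub_mul_pow_ne_zero_of_qPoch_ne_zero hDk
  set w := B * D / (q * A * C * E)
  set Λ := A * (B - 1) * (D - 1) / ((B - A) * (D - A) * (1 - C) * (1 - E))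
  set u : ℕ → ℂ := fun k ↦ phi32Coeff q A C E B D k * w ^ k
  set S : ℕ → ℂ := fun k ↦ phi32Coeff q A C E B D k * ((1 - q ^ k) * w ^ k)
  set F : ℕ → ℂ := fun k ↦ Λ * (q * A * C * E / (B * D) - C * E * q ^ k) * S k
  have hu : Summable u := summable_phi32Coeff_mul_pow hq hw A C E B D
  have hS : Summable S :=
    (hu.sub (hu.pow_mul_of_norm_le_one hq.le)).congr fun k ↦ by simp only [u, S]; ring
  have hF : Summable F := ((hS.mul_left (Λ * (q * A * C * E / (B * D)))).sub
    ((hS.pow_mul_of_norm_le_one hq.le).mul_left (Λ * C * E))).congr fun k ↦ by simp only [F]; ring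
  have hqw : ‖q * w‖ < 1 := by
    rw [norm_mul]
    exact mul_lt_one_of_nonneg_of_lt_one_left (norm_nonneg q) hq hw.le
  rw [show B * D / (A * C * E) = q * w by simp only [w]; field_simp, phi32_eq_tsum,
    phi32_eq_tsum, phi32s_eq_tsum, ← tsum_mul_left, ← tsum_mul_left]
  refine tsum_eq_add_of_eq_add_add_sub_succ ((summable_phi32Coeff_mul_pow hq hqw ..).mul_left _)
    (hS.mul_left _) hF (by simp [F, S]) fun k ↦ ?_
  have ht : phi32Coeff q A (q * C) (q * E) (q * B) (q * D) k * (q * w) ^ k =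
      u k * (q ^ k * ((1 - C * q ^ k) * (1 - E * q ^ k) * (1 - B) * (1 - D) /
        ((1 - C) * (1 - E) * (1 - B * q ^ k) * (1 - D * q ^ k)))) := by
    rw [phi32Coeff_mul_left q A hC1 hE1 (by simpa using hBq 0) (by simpa using hDq 0), mul_pow]
    ring
  have hS1 : S (k + 1) = u k * (w * ((1 - A * q ^ k) * (1 - C * q ^ k) * (1 - E * q ^ k) /
      ((1 - B * q ^ k) * (1 - D * q ^ k)))) := by
    simp only [S, u]
    linear_combination w ^ (k + 1) * phi32Coeff_succ_mul_one_sub_pow hq A C E B D k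
  simp only [F, pow_succ' q k]
  rw [ht, hS1]
  linear_combination u k * contiguous_ratio_identity (x := q ^ k) hq0 hA hC hE hB hD hAB hAD
    hC1 hE1 (hBq k) (hDq k)

theorem patternD_general (q a b c d e : ℂ)
    (hq0 : 0 < ‖q‖) (hq1 : ‖q‖ < 1)
    (ha : a ≠ 0) (hc : c ≠ 0) (he : e ≠ 0)
    (hb0 : b ≠ 0) (hd0 : d ≠ 0)
    (hconv : ‖b * d / (q * a * c * e)‖ < 1)
    (h1 : 1 - q * a / b ≠ 0) (h2 : 1 - q * a / d ≠ 0)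
    (h3 : 1 - c / q ≠ 0) (h4 : 1 - e / q ≠ 0)
    (hp2 : ∀ k, qPoch q (b / q) k ≠ 0) (hp3 : ∀ k, qPoch q (d / q) k ≠ 0) :
    (phi32 q (b * d / (a * c * e)) a c e b d =
      (1 - q / b) * (1 - q / d) * a / ((1 - q * a / b) * (1 - q * a / d)) *
        phi32 q (b * d / (a * c * e)) a (c / q) (e / q) (b / q) (d / q) +
      (1 - a) * (1 - q * a * c * e / (b * d)) * q / ((1 - q * a / b) * (1 - q * a / d) * (c * e)) *
        phi32 q (b * d / (q * a * c * e)) (q * a) c e b d) ∧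
    (phi32 q (b * d / (a * c * e)) a c e b d =
      (1 - q / b) * (1 - q / d) * a / ((1 - q * a / b) * (1 - q * a / d)) *
        phi32 q (b * d / (a * c * e)) a (c / q) (e / q) (b / q) (d / q) +
      (1 - q * a * c * e / (b * d)) * (1 - q / b) * (1 - q / d) * a / ((1 - q * a / b) * (1 - q * a / d) * (1 - c / q) * (1 - e / q)) *
        phi32s q (b * d / (q * a * c * e)) a (c / q) (e / q) (b / q) (d / q)) := by
  have hq : q ≠ 0 := norm_pos_iff.1 hq0
  have hbq := one_sub_mul_pow_ne_zero_of_qPoch_ne_zero hp2 0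
  have hdq := one_sub_mul_pow_ne_zero_of_qPoch_ne_zero hp3 0
  rw [pow_zero, mul_one] at hbq hdq
  have hrel := phi32_contiguous hq1 hq ha (div_ne_zero hc hq) (div_ne_zero he hq)
    (div_ne_zero hb0 hq) (div_ne_zero hd0 hq) (by convert hconv using 2; field_simp) h3 h4
    (sub_ne_zero.2 fun h ↦ h1 (by rw [← h, mul_div_cancel₀ _ hq, div_self hb0, sub_self]))
    (sub_ne_zero.2 fun h ↦ h2 (by rw [← h, mul_div_cancel₀ _ hq, div_self hd0, sub_self]))
    hp2 hp3
  have hshift := phi32s_eq_mul_phi32 hq1 (b * d / (q * a * c * e)) a (c / q) (e / q) (b / q) (d / q)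
  have hz : b / q * (d / q) / (a * (c / q) * (e / q)) = b * d / (a * c * e) := by field_simp
  have hw : b / q * (d / q) / (q * a * (c / q) * (e / q)) = b * d / (q * a * c * e) := by field_simp
  simp only [mul_div_cancel₀ _ hq, hz, hw] at hrel hshift
  simp only [one_sub_div hb0, one_sub_div hd0, one_sub_div hq, div_ne_zero_iff, and_iff_left hb0,
    and_iff_left hd0, and_iff_left hq] at h1 h2 h3 h4 hbq hdq
  refine ⟨?_, ?_⟩
  · rw [hrel, hshift, ← mul_assoc]
    congr 2
    · field_simp
    · field_simp
      ring
  · rw [hrel]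
    congr 2 <;> field_simp

theorem patternD (q a b c d e : ℂ)
    (hq0 : 0 < ‖q‖) (hq1 : ‖q‖ < 1)
    (ha : a ≠ 0) (hc : c ≠ 0) (he : e ≠ 0)
    (hb0 : b ≠ 0) (hd0 : d ≠ 0)
    (hconv : ‖b * d / (q * a * c * e)‖ < 1)
    (h1 : 1 - q * a / b ≠ 0) (h2 : 1 - q * a / d ≠ 0)
    (h3 : 1 - c / q ≠ 0) (h4 : 1 - e / q ≠ 0)
    (hp0 : ∀ k, qPoch q (b) k ≠ 0) (hp1 : ∀ k, qPoch q (d) k ≠ 0) (hp2 : ∀ k, qPoch q (b / q) k ≠ 0) (hp3 : ∀ k, qPoch q (d / q) k ≠ 0) :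
    (phi32 q (b * d / (a * c * e)) a c e b d =
      (1 - q / b) * (1 - q / d) * a / ((1 - q * a / b) * (1 - q * a / d)) *
        phi32 q (b * d / (a * c * e)) a (c / q) (e / q) (b / q) (d / q) +
      (1 - a) * (1 - q * a * c * e / (b * d)) * q / ((1 - q * a / b) * (1 - q * a / d) * (c * e)) *
        phi32 q (b * d / (q * a * c * e)) (q * a) c e b d) ∧
    (phi32 q (b * d / (a * c * e)) a c e b d =
      (1 - q / b) * (1 - q / d) * a / ((1 - q * a / b) * (1 - q * a / d)) *
        phi32 q (b * d / (a * c * e)) a (c / q) (e / q) (b / q) (d / q) +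
      (1 - q * a * c * e / (b * d)) * (1 - q / b) * (1 - q / d) * a / ((1 - q * a / b) * (1 - q * a / d) * (1 - c / q) * (1 - e / q)) *
        phi32s q (b * d / (q * a * c * e)) a (c / q) (e / q) (b / q) (d / q)) :=
  patternD_general q a b c d e hq0 hq1 ha hc he hb0 hd0 hconv h1 h2 h3 h4 hp2 hp3
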